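/- Let x* ∈ Ω be a Pareto optimal solution of the multiobjective problem min F(x) with f_i(x) > z*_i for all x and i. Then there exists a weight vector λ with λ_i > 0 and Σλ_i = 1 such that x* minimizes g^te(x|λ, z*) = max_i λ_i(f_i(x) − z*_i) over Ω. (Choose λ_i proportional to 1/(f_i(x*) − z*_i).) -/
import Mathlib


theorem stmt_7 {Ω : Type*} {m : ℕ} (hm : 0 < m) (f : Fin m → Ω → ℝ)
    (zstar : Fin m → ℝ) (hz : ∀ x i, zstar i < f i x)
    (xstar : Ω)
    (hpareto : ¬ ∃ x, (∀ i, f i x ≤ f i xstar) ∧ (∃ j, f j x < f j xstar)) :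
    ∃ lam : Fin m → ℝ, (∀ i, 0 < lam i) ∧ (∑ i, lam i = 1) ∧
      ∀ x, Finset.univ.sup' ⟨⟨0, hm⟩, Finset.mem_univ _⟩
          (fun i => lam i * (f i xstar - zstar i)) ≤
        Finset.univ.sup' ⟨⟨0, hm⟩, Finset.mem_univ _⟩
          (fun i => lam i * (f i x - zstar i)) := by
  have hpos : ∀ i, 0 < f i xstar - zstar i := fun i => sub_pos.mpr (hz xstar i)
  set S : ℝ := ∑ i, (f i xstar - zstar i)⁻¹ with hS
  have hSpos : 0 < S := by
    apply Finset.sum_pos (fun i _ => inv_pos.mpr (hpos i))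
    exact ⟨⟨0, hm⟩, Finset.mem_univ _⟩
  refine ⟨fun i => (f i xstar - zstar i)⁻¹ / S, fun i => div_pos (inv_pos.mpr (hpos i)) hSpos, ?_, ?_⟩
  · rw [← Finset.sum_div, ← hS, div_self hSpos.ne']
  · intro x
    have hconst : ∀ i, (f i xstar - zstar i)⁻¹ / S * (f i xstar - zstar i) = S⁻¹ := by
      intro i
      rw [div_mul_eq_mul_div, inv_mul_cancel₀ (hpos i).ne', one_div]
    have hLHS : Finset.univ.sup' ⟨⟨0, hm⟩, Finset.mem_univ _⟩
        (fun i => (f i xstar - zstar i)⁻¹ / S * (f i xstar - zstar i)) = S⁻¹ := by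
      rw [show (fun i => (f i xstar - zstar i)⁻¹ / S * (f i xstar - zstar i))
        = fun _ => S⁻¹ from funext hconst]
      exact Finset.sup'_const _ _
    rw [hLHS]
    by_contra hlt
    push_neg at hlt
    apply hpareto
    have hall : ∀ i, f i x < f i xstar := by
      intro i
      have h1 : (f i xstar - zstar i)⁻¹ / S * (f i x - zstar i) < S⁻¹ :=
        lt_of_le_of_lt (Finset.le_sup'
        (fun j => (f j xstar - zstar j)⁻¹ / S * (f j x - zstar j)) (Finset.mem_univ i)) hlt
      rw [← hconst i] at h1
      have hc : 0 < (f i xstar - zstar i)⁻¹ / S :=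
        div_pos (inv_pos.mpr (hpos i)) hSpos
      have h2 : f i x - zstar i < f i xstar - zstar i :=
        lt_of_mul_lt_mul_left h1 hc.le
      linarith
    exact ⟨x, fun i => (hall i).le, ⟨0, hm⟩, hall _⟩
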